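/- arXiv:2411.03599 — 3 statements merged into one kernel-verified Lean document; each statement's English description precedes it below -/
import Mathlib

section
/- If R = VΛV⁻¹ with Λ diagonal and all eigenvalues of modulus 1, and L = I − Σ_{m=1}^{M}|m⟩⟨m−1|⊗R is the block bidiagonal time-stepping matrix, then ‖L‖ ≤ 1 + κ(V) and ‖L⁻¹‖ ≤ 1 + M·κ(V), so κ(L) ≤ (1 + κ(V))(1 + M κ(V)). -/
open scoped Matrix.Norms.L2Operator Kronecker
open Matrix



private lemma sum_ite_cast {N : ℕ} (c : ℕ) (v : Fin N → ℂ) :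
    ∑ t : Fin N, (if (t : ℕ) = c then 1 else 0) * v t =
      if h : c < N then v ⟨c, h⟩ else 0 := by
  split_ifs with h
  · rw [Finset.sum_eq_single ⟨c, h⟩]
    · simp
    · intro b _ hb
      rw [if_neg (by simpa [Fin.ext_iff] using hb), zero_mul]
    · simp
  · apply Finset.sum_eq_zero
    intro t _
    rw [if_neg (by have := t.isLt; omega), zero_mul]

private lemma sum_ite_cast' {N : ℕ} (c : ℕ) (v : Fin N → ℂ) :
    ∑ t : Fin N, v t * (if (t : ℕ) = c then 1 else 0) =
      if h : c < N then v ⟨c, h⟩ else 0 := by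
  rw [← sum_ite_cast c v]
  exact Finset.sum_congr rfl fun t _ => mul_comm _ _

private lemma norm_le_of_bound {N : Type*} [Fintype N] [DecidableEq N]
    (A : Matrix N N ℂ) (c : ℝ) (hc : 0 ≤ c)
    (h : ∀ x : N → ℂ, ∑ i, ‖(A *ᵥ x) i‖ ^ 2 ≤ c ^ 2 * ∑ i, ‖x i‖ ^ 2) :
    ‖A‖ ≤ c := by
  rw [Matrix.cstar_norm_def]
  refine ContinuousLinearMap.opNorm_le_bound _ hc fun x => ?_
  have hx : x = (WithLp.equiv 2 (N → ℂ)).symm ((WithLp.equiv 2 (N → ℂ)) x) := rfl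
  rw [hx]
  change ‖(WithLp.equiv 2 (N → ℂ)).symm (Matrix.toLin' A ((WithLp.equiv 2 (N → ℂ)) x))‖ ≤ c * ‖(WithLp.equiv 2 (N → ℂ)).symm ((WithLp.equiv 2 (N → ℂ)) x)‖
  set y : N → ℂ := (WithLp.equiv 2 (N → ℂ)) x with hy
  have h1 : ‖(WithLp.equiv 2 (N → ℂ)).symm (Matrix.toLin' A y)‖
      = Real.sqrt (∑ i, ‖(A *ᵥ y) i‖ ^ 2) := by
    rw [EuclideanSpace.norm_eq]
    simp [Matrix.toLin'_apply]
  have h2 : ‖(WithLp.equiv 2 (N → ℂ)).symm y‖ = Real.sqrt (∑ i, ‖y i‖ ^ 2) := by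
    rw [EuclideanSpace.norm_eq]; rfl
  rw [h1, h2]
  calc Real.sqrt (∑ i, ‖(A *ᵥ y) i‖ ^ 2) ≤ Real.sqrt (c ^ 2 * ∑ i, ‖y i‖ ^ 2) :=
        Real.sqrt_le_sqrt (h y)
    _ = c * Real.sqrt (∑ i, ‖y i‖ ^ 2) := by
        rw [Real.sqrt_mul (sq_nonneg c), Real.sqrt_sq hc]

private lemma mulvec_sq_le {n : ℕ} (B : Matrix (Fin n) (Fin n) ℂ) (v : Fin n → ℂ) :
    ∑ i, ‖(B *ᵥ v) i‖ ^ 2 ≤ ‖B‖ ^ 2 * ∑ i, ‖v i‖ ^ 2 := by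
  have h := B.l2_opNorm_mulVec ((WithLp.equiv 2 (Fin n → ℂ)).symm v)
  rw [EuclideanSpace.norm_eq, EuclideanSpace.norm_eq] at h
  have hb : (0:ℝ) ≤ ‖B‖ * Real.sqrt (∑ i, ‖v i‖ ^ 2) :=
    mul_nonneg (norm_nonneg _) (Real.sqrt_nonneg _)
  have := pow_le_pow_left₀ (Real.sqrt_nonneg _) h 2
  rw [Real.sq_sqrt (Finset.sum_nonneg fun i _ => sq_nonneg _)] at this
  calc ∑ i, ‖(B *ᵥ v) i‖ ^ 2 ≤ (‖B‖ * Real.sqrt (∑ i, ‖v i‖ ^ 2)) ^ 2 := this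
    _ = ‖B‖ ^ 2 * ∑ i, ‖v i‖ ^ 2 := by
        rw [mul_pow, Real.sq_sqrt (Finset.sum_nonneg fun i _ => sq_nonneg _)]

private lemma norm_diagonal_le {n : ℕ} (d : Fin n → ℂ) (hd : ∀ i, ‖d i‖ ≤ 1) :
    ‖Matrix.diagonal d‖ ≤ 1 := by
  apply norm_le_of_bound _ _ zero_le_one
  intro x
  rw [one_pow, one_mul]
  apply Finset.sum_le_sum
  intro i _
  rw [Matrix.mulVec_diagonal, norm_mul]
  have h1 : ‖d i‖ ≤ 1 := hd i
  rw [mul_pow]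
  have h2 : ‖d i‖ ^ 2 ≤ 1 := by nlinarith [norm_nonneg (d i)]
  nlinarith [sq_nonneg ‖x i‖]


private lemma shift_sum_le {M k : ℕ} (F : Fin (M+1) → ℝ) (hF : ∀ m, 0 ≤ F m)
    (sub : Fin (M+1) → Fin (M+1)) (hsub : ∀ m, (sub m : ℕ) = (m : ℕ) - k) :
    ∑ m : Fin (M+1), (if k ≤ (m : ℕ) then F (sub m) else 0) ≤ ∑ m : Fin (M+1), F m := by
  rw [← Finset.sum_filter]
  set s := Finset.filter (fun m : Fin (M+1) => k ≤ (m : ℕ)) Finset.univ with hs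
  have hinj : ∀ a ∈ s, ∀ b ∈ s, sub a = sub b → a = b := by
    intro a ha b hb hab
    rw [hs, Finset.mem_filter] at ha hb
    have h2 := congrArg (Fin.val) hab
    rw [hsub, hsub] at h2
    exact Fin.ext (by omega)
  calc ∑ m ∈ s, F (sub m) = ∑ m' ∈ s.image sub, F m' := (Finset.sum_image hinj).symm
    _ ≤ ∑ m' : Fin (M+1), F m' := Finset.sum_le_sum_of_subset_of_nonneg (Finset.subset_univ _)
        (fun i _ _ => hF i)

set_option maxHeartbeats 1000000 in
private lemma kron_norm_le {M n k : ℕ} (A : Matrix (Fin (M+1)) (Fin (M+1)) ℂ)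
    (hA : ∀ m m', A m m' = if (m : ℕ) = (m' : ℕ) + k then 1 else 0)
    (B : Matrix (Fin n) (Fin n) ℂ) : ‖A ⊗ₖ B‖ ≤ ‖B‖ := by
  apply norm_le_of_bound _ _ (norm_nonneg B)
  intro x
  set xs : Fin (M+1) → Fin n → ℂ := fun m i => x (m, i) with hxs
  have sub_lt : ∀ m : Fin (M+1), (m : ℕ) - k < M + 1 := fun m => by have := m.isLt; omega
  set sub : Fin (M+1) → Fin (M+1) := fun m => ⟨(m : ℕ) - k, sub_lt m⟩ with hsubdef
  have hy : ∀ m i, ((A ⊗ₖ B) *ᵥ x) (m, i)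
      = if k ≤ (m : ℕ) then (B *ᵥ xs (sub m)) i else 0 := by
    intro m i
    have step : ((A ⊗ₖ B) *ᵥ x) (m, i) = ∑ m' : Fin (M+1), A m m' * ((B *ᵥ xs m') i) := by
      simp only [Matrix.mulVec, dotProduct, Fintype.sum_prod_type,
        Matrix.kroneckerMap_apply, Finset.mul_sum, mul_assoc, hxs]
    rw [step]
    by_cases hk : k ≤ (m : ℕ)
    · rw [if_pos hk]
      have ha : ∀ m' : Fin (M+1), A m m' = if (m' : ℕ) = (m : ℕ) - k then 1 else 0 := by
        intro m'
        rw [hA]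
        exact if_congr (by omega) rfl rfl
      simp_rw [ha]
      rw [sum_ite_cast ((m : ℕ) - k) (fun m' => (B *ᵥ xs m') i), dif_pos (sub_lt m)]
    · rw [if_neg hk]
      apply Finset.sum_eq_zero
      intro m' _
      rw [hA, if_neg (by omega), zero_mul]
  calc ∑ p : Fin (M+1) × Fin n, ‖((A ⊗ₖ B) *ᵥ x) p‖ ^ 2
      = ∑ m, ∑ i, ‖((A ⊗ₖ B) *ᵥ x) (m, i)‖ ^ 2 := Fintype.sum_prod_type _
    _ = ∑ m : Fin (M+1), (if k ≤ (m : ℕ) then ∑ i, ‖(B *ᵥ xs (sub m)) i‖ ^ 2 else 0) := by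
        refine Finset.sum_congr rfl fun m _ => ?_
        simp_rw [hy m]
        split_ifs <;> simp
    _ ≤ ∑ m : Fin (M+1), (if k ≤ (m : ℕ) then ‖B‖ ^ 2 * ∑ i, ‖xs (sub m) i‖ ^ 2 else 0) := by
        refine Finset.sum_le_sum fun m _ => ?_
        split_ifs
        · exact mulvec_sq_le B (xs (sub m))
        · exact le_refl 0
    _ = ‖B‖ ^ 2 * ∑ m : Fin (M+1), (if k ≤ (m : ℕ) then ∑ i, ‖xs (sub m) i‖ ^ 2 else 0) := by
        rw [Finset.mul_sum]
        refine Finset.sum_congr rfl fun m _ => ?_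
        split_ifs <;> simp
    _ ≤ ‖B‖ ^ 2 * ∑ m' : Fin (M+1), ∑ i, ‖xs m' i‖ ^ 2 := by
        refine mul_le_mul_of_nonneg_left ?_ (sq_nonneg _)
        exact shift_sum_le (fun m' => ∑ i, ‖xs m' i‖ ^ 2)
          (fun m => Finset.sum_nonneg fun i _ => sq_nonneg _) sub (fun m => rfl)
    _ = ‖B‖ ^ 2 * ∑ p : Fin (M+1) × Fin n, ‖x p‖ ^ 2 :=
        congrArg (‖B‖ ^ 2 * ·) (Fintype.sum_prod_type (fun p : Fin (M+1) × Fin n => ‖x p‖ ^ 2)).symm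




/-- If `R = VΛV⁻¹` with `Λ` diagonal with unimodular entries, the block bidiagonal
time-stepping matrix `L = I - Σ_{m=1}^M |m⟩⟨m-1| ⊗ R` satisfies
`‖L‖ ≤ 1 + κ(V)`, `‖L⁻¹‖ ≤ 1 + M κ(V)`, and `κ(L) ≤ (1 + κ(V))(1 + M κ(V))`. -/
theorem stmt_8 {M n : ℕ} (R V Λ : Matrix (Fin n) (Fin n) ℂ)
    (hV : IsUnit V) (hR : R = V * Λ * V⁻¹) (hdiag : Λ.IsDiag)
    (hmod : ∀ i, ‖Λ i i‖ = 1)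
    (S : Matrix (Fin (M + 1)) (Fin (M + 1)) ℂ)
    (hS : ∀ m m' : Fin (M + 1), S m m' = if (m : ℕ) = (m' : ℕ) + 1 then 1 else 0)
    (L : Matrix (Fin (M + 1) × Fin n) (Fin (M + 1) × Fin n) ℂ)
    (hL : L = 1 - S ⊗ₖ R) :
    ‖L‖ ≤ 1 + ‖V‖ * ‖V⁻¹‖ ∧ ‖L⁻¹‖ ≤ 1 + M * (‖V‖ * ‖V⁻¹‖) ∧
      ‖L‖ * ‖L⁻¹‖ ≤ (1 + ‖V‖ * ‖V⁻¹‖) * (1 + M * (‖V‖ * ‖V⁻¹‖)) := by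
  have hκ : (0:ℝ) ≤ ‖V‖ * ‖V⁻¹‖ := mul_nonneg (norm_nonneg _) (norm_nonneg _)
  -- norm of identity
  have hone : ∀ {N : Type} [Fintype N] [DecidableEq N],
      ‖(1 : Matrix N N ℂ)‖ ≤ 1 := by
    intro N _ _
    rw [Matrix.cstar_norm_def, _root_.map_one]
    exact ContinuousLinearMap.norm_id_le
  -- powers of Λ have norm ≤ 1
  have hΛd : Λ = Matrix.diagonal Λ.diag := hdiag.diagonal_diag.symm
  have hΛpow : ∀ j : ℕ, ‖Λ ^ j‖ ≤ 1 := by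
    intro j
    rw [hΛd, Matrix.diagonal_pow]
    apply norm_diagonal_le
    intro i
    rw [Pi.pow_apply, norm_pow, Matrix.diag_apply, hmod i, one_pow]
  -- powers of R
  have hdet : IsUnit V.det := (Matrix.isUnit_iff_isUnit_det V).mp hV
  have hVV : V⁻¹ * V = 1 := Matrix.nonsing_inv_mul V hdet
  have hRpow : ∀ j : ℕ, R ^ (j + 1) = V * Λ ^ (j + 1) * V⁻¹ := by
    intro j
    induction j with
    | zero => simpa using hR
    | succ j ih =>
      rw [pow_succ, ih, hR]
      rw [show V * Λ ^ (j+1) * V⁻¹ * (V * Λ * V⁻¹) = V * Λ ^ (j+1) * (V⁻¹ * V) * Λ * V⁻¹ by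
        noncomm_ring]
      rw [hVV, mul_one, pow_succ]
      noncomm_ring
  have hRnorm : ∀ j : ℕ, ‖R ^ (j + 1)‖ ≤ ‖V‖ * ‖V⁻¹‖ := by
    intro j
    rw [hRpow j]
    calc ‖V * Λ ^ (j+1) * V⁻¹‖ ≤ ‖V * Λ ^ (j+1)‖ * ‖V⁻¹‖ := Matrix.l2_opNorm_mul _ _
      _ ≤ ‖V‖ * ‖Λ ^ (j+1)‖ * ‖V⁻¹‖ := by
          have := Matrix.l2_opNorm_mul V (Λ ^ (j+1))
          exact mul_le_mul_of_nonneg_right this (norm_nonneg _)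
      _ ≤ ‖V‖ * 1 * ‖V⁻¹‖ := by
          have := hΛpow (j+1)
          have h0 : (0:ℝ) ≤ ‖V‖ := norm_nonneg _
          have h1 : (0:ℝ) ≤ ‖V⁻¹‖ := norm_nonneg _
          nlinarith [norm_nonneg (Λ ^ (j+1))]
      _ = ‖V‖ * ‖V⁻¹‖ := by ring
  -- powers of S
  have hSpow : ∀ (k : ℕ) (m m' : Fin (M + 1)),
      (S ^ k) m m' = if (m : ℕ) = (m' : ℕ) + k then 1 else 0 := by
    intro k
    induction k with
    | zero => intro m m'; simp [Matrix.one_apply, Fin.ext_iff]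
    | succ k ih =>
      intro m m'
      rw [pow_succ, Matrix.mul_apply]
      simp_rw [ih, hS]
      rw [sum_ite_cast' ((m' : ℕ) + 1) (fun t => if (m : ℕ) = (t : ℕ) + k then 1 else 0)]
      by_cases h : (m' : ℕ) + 1 < M + 1
      · rw [dif_pos h]
        exact if_congr (by simp only [Fin.val_mk]; omega) rfl rfl
      · rw [dif_neg h, if_neg (by have := m.isLt; omega)]
  have hSM : S ^ (M + 1) = 0 := by
    ext m m'
    rw [hSpow]
    have := m.isLt
    simp only [Matrix.zero_apply]
    rw [if_neg (by omega)]
  -- powers of N = S ⊗ R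
  have hNpow : ∀ j : ℕ, (S ⊗ₖ R) ^ j = (S ^ j) ⊗ₖ (R ^ j) := by
    intro j
    induction j with
    | zero => simp [Matrix.one_kronecker_one]
    | succ j ih => rw [pow_succ, ih, ← Matrix.mul_kronecker_mul, ← pow_succ, ← pow_succ]
  -- inverse of L
  have hNM : (S ⊗ₖ R) ^ (M + 1) = 0 := by rw [hNpow, hSM, Matrix.zero_kronecker]
  have hLinv : L⁻¹ = ∑ j ∈ Finset.range (M + 1), (S ⊗ₖ R) ^ j := by
    apply Matrix.inv_eq_right_inv
    rw [hL, ← neg_sub (S ⊗ₖ R) 1, neg_mul, mul_geom_sum, hNM]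
    simp
  -- norm bounds
  have hLbound : ‖L‖ ≤ 1 + ‖V‖ * ‖V⁻¹‖ := by
    rw [hL]
    calc ‖1 - S ⊗ₖ R‖ ≤ ‖(1 : Matrix (Fin (M+1) × Fin n) (Fin (M+1) × Fin n) ℂ)‖ + ‖S ⊗ₖ R‖ :=
          norm_sub_le _ _
      _ ≤ 1 + ‖V‖ * ‖V⁻¹‖ := by
          have h1 := kron_norm_le (k := 1) S hS R
          have h2 : ‖R‖ ≤ ‖V‖ * ‖V⁻¹‖ := by simpa using hRnorm 0
          exact add_le_add hone (le_trans h1 h2)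
  have hLinvBound : ‖L⁻¹‖ ≤ 1 + M * (‖V‖ * ‖V⁻¹‖) := by
    rw [hLinv]
    calc ‖∑ j ∈ Finset.range (M + 1), (S ⊗ₖ R) ^ j‖
        ≤ ∑ j ∈ Finset.range (M + 1), ‖(S ⊗ₖ R) ^ j‖ := norm_sum_le _ _
      _ = (∑ j ∈ Finset.range M, ‖(S ⊗ₖ R) ^ (j + 1)‖) + ‖(S ⊗ₖ R) ^ 0‖ :=
          Finset.sum_range_succ' _ M
      _ ≤ (∑ _j ∈ Finset.range M, ‖V‖ * ‖V⁻¹‖) + 1 := by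
          refine add_le_add (Finset.sum_le_sum fun j _ => ?_) (by simpa using hone)
          rw [hNpow]
          exact le_trans (kron_norm_le (k := j+1) (S ^ (j+1)) (hSpow (j+1)) (R ^ (j+1)))
            (hRnorm j)
      _ = 1 + M * (‖V‖ * ‖V⁻¹‖) := by
          rw [Finset.sum_const, Finset.card_range]
          push_cast
          ring
  exact ⟨hLbound, hLinvBound,
    mul_le_mul hLbound hLinvBound (norm_nonneg _) (by positivity)⟩
end

section
/- Dyson-series truncation for a nilpotent perturbation: if A = A₀ + A₁ where A₁ satisfies (E A₁)^N = 0 for every matrix E that is block-diagonal with respect to a grading for which A₀ is block diagonal and A₁ raises the grading by one (in particular A₁ is N-nilpotent and products exp(sA₀)A₁ preserve nilpotency), then the iterated variation-of-constants expansion of exp(tA) terminates: exp(tA) = Σ_{k=0}^{N−1} ∫_{0≤t_k≤…≤t_1≤t} exp((t−t₁)A₀)A₁ exp((t₁−t₂)A₀)A₁ ⋯ A₁ exp(t_k A₀) dt_k⋯dt₁. -/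
open scoped Matrix.Norms.L2Operator
open Matrix

/-- The `k`-th term of the Dyson (variation-of-constants) expansion of `exp (t (A₀ + A₁))`:
`D₀ t = exp (t A₀)` and `D_{k+1} t = ∫₀ᵗ exp((t-s)A₀) A₁ (D_k s) ds`, so that
`D_k t` is the `k`-fold iterated simplex integral
`∫_{0 ≤ t_k ≤ ⋯ ≤ t₁ ≤ t} exp((t-t₁)A₀) A₁ ⋯ A₁ exp(t_k A₀)`. -/
noncomputable def dysonTerm {n : ℕ} (A₀ A₁ : Matrix (Fin n) (Fin n) ℂ) :
    ℕ → ℝ → Matrix (Fin n) (Fin n) ℂ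
  | 0, t => NormedSpace.exp (t • A₀)
  | k + 1, t => ∫ s in (0 : ℝ)..t,
      NormedSpace.exp ((t - s) • A₀) * A₁ * dysonTerm A₀ A₁ k s

open MeasureTheory

namespace Dyson16

variable {n N : ℕ}

noncomputable def E (X : Matrix (Fin n) (Fin n) ℂ) (t : ℝ) : Matrix (Fin n) (Fin n) ℂ :=
  NormedSpace.exp (t • X)

lemma E_hasDerivAt' (X : Matrix (Fin n) (Fin n) ℂ) (t : ℝ) :
    HasDerivAt (E X) (X * E X t) t := by
  have := hasDerivAt_exp_smul_const' (𝕂 := ℝ) X t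
  exact this

lemma E_continuous (X : Matrix (Fin n) (Fin n) ℂ) : Continuous (E X) :=
  by
  letI : NormedAlgebra ℚ (Matrix (Fin n) (Fin n) ℂ) := .restrictScalars ℚ ℂ _
  exact NormedSpace.exp_continuous.comp (continuous_id.smul continuous_const)

lemma E_zero (X : Matrix (Fin n) (Fin n) ℂ) : E X 0 = 1 := by
  simp [E, NormedSpace.exp_zero]

lemma E_comm (X : Matrix (Fin n) (Fin n) ℂ) (t : ℝ) : X * E X t = E X t * X :=
  (((Commute.refl X).smul_right t).exp_right).eq

lemma duhamel (A₀ A₁ : Matrix (Fin n) (Fin n) ℂ) (t : ℝ) :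
    E (A₀ + A₁) t = E A₀ t + ∫ s in (0:ℝ)..t, E A₀ (t - s) * A₁ * E (A₀ + A₁) s := by
  set B := A₀ + A₁ with hB
  have key : ∀ s ∈ Set.uIcc (0:ℝ) t, HasDerivAt (fun u => E A₀ (t - u) * E B u)
      (E A₀ (t - s) * A₁ * E B s) s := by
    intro s _
    have h1 : HasDerivAt (fun u : ℝ => E A₀ (t - u)) ((-1 : ℝ) • (A₀ * E A₀ (t - s))) s :=
      (E_hasDerivAt' A₀ (t - s)).scomp s (((hasDerivAt_id s).const_sub t))
    have h2 := (h1.mul (E_hasDerivAt' B s))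
    refine h2.congr_deriv ?_
    symm
    rw [E_comm A₀]
    simp only [neg_smul, one_smul, hB]
    noncomm_ring
  have hcont : IntervalIntegrable (fun s => E A₀ (t - s) * A₁ * E B s) volume 0 t := by
    apply Continuous.intervalIntegrable
    exact (((E_continuous A₀).comp (continuous_const.sub continuous_id)).mul
      continuous_const).mul (E_continuous B)
  have := intervalIntegral.integral_eq_sub_of_hasDerivAt key hcont
  rw [this]
  simp [E_zero, sub_self]


noncomputable def rem (A₀ A₁ : Matrix (Fin n) (Fin n) ℂ) : ℕ → ℝ → Matrix (Fin n) (Fin n) ℂ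
  | 0, t => E (A₀ + A₁) t
  | k + 1, t => ∫ s in (0:ℝ)..t, E A₀ (t - s) * A₁ * rem A₀ A₁ k s

lemma cont_aux (A₀ A₁ : Matrix (Fin n) (Fin n) ℂ) {f : ℝ → Matrix (Fin n) (Fin n) ℂ}
    (hf : Continuous f) :
    Continuous (fun t => ∫ s in (0:ℝ)..t, E A₀ (t - s) * A₁ * f s) := by
  apply intervalIntegral.continuous_parametric_intervalIntegral_of_continuous (μ := volume) ?_ continuous_id
  exact (((E_continuous A₀).comp (continuous_fst.sub continuous_snd)).mul
    continuous_const).mul (hf.comp continuous_snd)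

lemma cont_dyson (A₀ A₁ : Matrix (Fin n) (Fin n) ℂ) :
    ∀ k, Continuous (dysonTerm A₀ A₁ k)
  | 0 => E_continuous A₀
  | k + 1 => cont_aux A₀ A₁ (cont_dyson A₀ A₁ k)

lemma cont_rem (A₀ A₁ : Matrix (Fin n) (Fin n) ℂ) :
    ∀ k, Continuous (rem A₀ A₁ k)
  | 0 => E_continuous _
  | k + 1 => cont_aux A₀ A₁ (cont_rem A₀ A₁ k)

lemma rem_eq (A₀ A₁ : Matrix (Fin n) (Fin n) ℂ) :
    ∀ k t, rem A₀ A₁ k t = dysonTerm A₀ A₁ k t + rem A₀ A₁ (k + 1) t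
  | 0, t => by simpa [rem, dysonTerm, E] using duhamel A₀ A₁ t
  | k + 1, t => by
    have h1 : IntervalIntegrable (fun s => E A₀ (t - s) * A₁ * dysonTerm A₀ A₁ k s)
        volume 0 t := Continuous.intervalIntegrable (by
      exact (((E_continuous A₀).comp (continuous_const.sub continuous_id)).mul
        continuous_const).mul (cont_dyson A₀ A₁ k)) _ _
    have h2 : IntervalIntegrable (fun s => E A₀ (t - s) * A₁ * rem A₀ A₁ (k+1) s)
        volume 0 t := Continuous.intervalIntegrable (by
      exact (((E_continuous A₀).comp (continuous_const.sub continuous_id)).mul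
        continuous_const).mul (cont_rem A₀ A₁ (k+1))) _ _
    show (∫ s in (0:ℝ)..t, E A₀ (t - s) * A₁ * rem A₀ A₁ k s) = _
    calc (∫ s in (0:ℝ)..t, E A₀ (t - s) * A₁ * rem A₀ A₁ k s)
        = ∫ s in (0:ℝ)..t, (E A₀ (t - s) * A₁ * dysonTerm A₀ A₁ k s
            + E A₀ (t - s) * A₁ * rem A₀ A₁ (k+1) s) := by
          apply intervalIntegral.integral_congr
          intro s _
          simp only []
          rw [rem_eq A₀ A₁ k s, mul_add]
      _ = _ := by
          rw [intervalIntegral.integral_add h1 h2]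
          rfl


def raises (g : Fin n → Fin N) (k : ℕ) (X : Matrix (Fin n) (Fin n) ℂ) : Prop :=
  ∀ i j, ((g j : ℕ) < (g i : ℕ) + k) → X i j = 0

lemma raises_mul {g : Fin n → Fin N} {a b : ℕ} {X Y : Matrix (Fin n) (Fin n) ℂ}
    (hX : raises g a X) (hY : raises g b Y) : raises g (a + b) (X * Y) := by
  intro i j hij
  rw [Matrix.mul_apply]
  apply Finset.sum_eq_zero
  intro l _
  rcases lt_or_ge ((g l : ℕ)) ((g i : ℕ) + a) with h | h
  · rw [hX i l h, zero_mul]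
  · rw [hY l j (by omega), mul_zero]

lemma raises_one {g : Fin n → Fin N} : raises g 0 (1 : Matrix (Fin n) (Fin n) ℂ) := by
  intro i j hij
  have hne : i ≠ j := by rintro rfl; omega
  exact Matrix.one_apply_ne hne

lemma raises_mono {g : Fin n → Fin N} {a b : ℕ} {X : Matrix (Fin n) (Fin n) ℂ}
    (h : raises g a X) (hba : b ≤ a) : raises g b X :=
  fun i j hij => h i j (by omega)

lemma raises_add {g : Fin n → Fin N} {k : ℕ} {X Y : Matrix (Fin n) (Fin n) ℂ}
    (hX : raises g k X) (hY : raises g k Y) : raises g k (X + Y) := by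
  intro i j h
  simp [Matrix.add_apply, hX i j h, hY i j h]

lemma raises_smul_real {g : Fin n → Fin N} {k : ℕ} {X : Matrix (Fin n) (Fin n) ℂ}
    (c : ℝ) (hX : raises g k X) : raises g k (c • X) := by
  intro i j h
  simp [Matrix.smul_apply, hX i j h]

lemma raises_pow {g : Fin n → Fin N} {X : Matrix (Fin n) (Fin n) ℂ}
    (hX : raises g 0 X) : ∀ m : ℕ, raises g 0 (X ^ m)
  | 0 => by simpa using (raises_one (g := g))
  | m + 1 => by
    have := raises_mul (raises_pow hX m) hX
    simpa [pow_succ] using this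

noncomputable def entryCLM (i j : Fin n) : Matrix (Fin n) (Fin n) ℂ →L[ℂ] ℂ :=
  LinearMap.toContinuousLinearMap
    { toFun := fun X => X i j
      map_add' := fun _ _ => rfl
      map_smul' := fun _ _ => rfl }

lemma raises_exp {g : Fin n → Fin N} {X : Matrix (Fin n) (Fin n) ℂ}
    (hX : raises g 0 X) : raises g 0 (NormedSpace.exp X) := by
  intro i j hij
  have hsum : Summable fun m : ℕ => ((m.factorial : ℂ)⁻¹) • X ^ m :=
    NormedSpace.expSeries_summable' (𝕂 := ℂ) X
  rw [NormedSpace.exp_eq_tsum (𝕂 := ℂ)]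
  show (entryCLM i j) (∑' m : ℕ, ((m.factorial : ℂ)⁻¹) • X ^ m) = 0
  rw [(entryCLM i j).map_tsum hsum]
  have h2 : ∀ m : ℕ, (entryCLM i j) (((m.factorial : ℂ)⁻¹) • X ^ m) = 0 := by
    intro m
    show ((m.factorial : ℂ)⁻¹) • (X ^ m) i j = 0
    rw [raises_pow hX m i j hij, smul_zero]
  simp [h2]

lemma raises_intervalIntegral {g : Fin n → Fin N} {k : ℕ}
    {f : ℝ → Matrix (Fin n) (Fin n) ℂ} {a b : ℝ}
    (hf : IntervalIntegrable f volume a b) (h : ∀ s, raises g k (f s)) :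
    raises g k (∫ s in a..b, f s) := by
  intro i j hij
  have hc := (entryCLM i j).intervalIntegral_comp_comm hf
  have : (entryCLM i j) (∫ s in a..b, f s) = ∫ s in a..b, (entryCLM i j) (f s) := hc.symm
  show (entryCLM i j) (∫ s in a..b, f s) = 0
  rw [this]
  have : ∀ s, (entryCLM i j) (f s) = 0 := fun s => h s i j hij
  simp [this]

lemma raises_E {g : Fin n → Fin N} {X : Matrix (Fin n) (Fin n) ℂ}
    (hX : raises g 0 X) (u : ℝ) : raises g 0 (E X u) :=
  raises_exp (raises_smul_real u hX)

lemma rem_raises {A₀ A₁ : Matrix (Fin n) (Fin n) ℂ} {g : Fin n → Fin N}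
    (hA₀ : raises g 0 A₀) (hA₁ : raises g 1 A₁) :
    ∀ k t, raises g k (rem A₀ A₁ k t)
  | 0, t => raises_E (raises_add hA₀ (raises_mono hA₁ (by omega))) t
  | k + 1, t => by
    have hint : IntervalIntegrable (fun s => E A₀ (t - s) * A₁ * rem A₀ A₁ k s)
        volume 0 t := Continuous.intervalIntegrable (by
      exact (((E_continuous A₀).comp (continuous_const.sub continuous_id)).mul
        continuous_const).mul (cont_rem A₀ A₁ k)) _ _
    show raises g (k + 1) (∫ s in (0:ℝ)..t, E A₀ (t - s) * A₁ * rem A₀ A₁ k s)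
    rw [show k + 1 = 1 + k from Nat.add_comm k 1]
    exact raises_intervalIntegral hint (fun s => by
      simpa using raises_mul (raises_mul (raises_E hA₀ (t - s)) hA₁)
        (rem_raises hA₀ hA₁ k s))

lemma main_expansion (A₀ A₁ : Matrix (Fin n) (Fin n) ℂ) :
    ∀ (k : ℕ) (t : ℝ), E (A₀ + A₁) t
      = (∑ j ∈ Finset.range k, dysonTerm A₀ A₁ j t) + rem A₀ A₁ k t
  | 0, t => by simp [rem]
  | k + 1, t => by
    rw [main_expansion A₀ A₁ k t, rem_eq A₀ A₁ k t, Finset.sum_range_succ]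
    abel

end Dyson16

/-- Dyson-series truncation for a nilpotent perturbation: if, with respect to an `N`-block
grading `g`, `A₀` is block diagonal and `A₁` raises the grading by exactly one, then the
variation-of-constants expansion of `exp (t (A₀ + A₁))` terminates after `N` terms. -/
theorem stmt_16 {n N : ℕ} (A₀ A₁ : Matrix (Fin n) (Fin n) ℂ)
    (g : Fin n → Fin N)
    (hA₀ : ∀ i j, g i ≠ g j → A₀ i j = 0)
    (hA₁ : ∀ i j, (g j : ℕ) ≠ (g i : ℕ) + 1 → A₁ i j = 0) :
    ∀ t : ℝ, 0 ≤ t →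
      NormedSpace.exp (t • (A₀ + A₁)) = ∑ k ∈ Finset.range N, dysonTerm A₀ A₁ k t := by
  intro t _
  have hA₀' : Dyson16.raises g 0 A₀ := fun i j hij =>
    hA₀ i j (by intro he; rw [he] at hij; omega)
  have hA₁' : Dyson16.raises g 1 A₁ := fun i j hij => hA₁ i j (by omega)
  have hz : Dyson16.rem A₀ A₁ N t = 0 := by
    ext i j
    have h1 := (g j).isLt
    have := Dyson16.rem_raises hA₀' hA₁' N t i j (by omega)
    simpa using this
  have hm := Dyson16.main_expansion A₀ A₁ N t
  rw [show NormedSpace.exp (t • (A₀ + A₁)) = Dyson16.E (A₀ + A₁) t from rfl, hm, hz,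
    add_zero]
end

section
/- With A = A₀ + A₁, ‖exp(tA₀)‖ ≤ c for all t ∈ [0,T] and A₁ an N-nilpotent block-superdiagonal perturbation with ‖A₁‖ ≤ b, the terminating Dyson expansion yields ‖exp(tA)‖ ≤ c · Σ_{k=0}^{N−1} (t b c)^k / k! for all t ∈ [0,T]. -/
open scoped Matrix.Norms.L2Operator
open Matrix NormedSpace intervalIntegral

namespace Stmt17Aux

variable {n : ℕ}

abbrev Mat (n : ℕ) := Matrix (Fin n) (Fin n) ℂ

noncomputable instance instNormedAlgebraRatMat : NormedAlgebra ℚ (Mat n) :=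
  NormedAlgebra.restrictScalars ℚ ℂ (Mat n)

/-- Entry extraction as a continuous linear map. -/
noncomputable def entryCLM (i j : Fin n) : Mat n →L[ℝ] ℂ :=
  LinearMap.toContinuousLinearMap
    { toFun := fun M => M i j
      map_add' := fun _ _ => rfl
      map_smul' := fun _ _ => rfl }

@[simp] lemma entryCLM_apply (i j : Fin n) (M : Mat n) : entryCLM i j M = M i j := rfl

lemma pow_entry_zero (r : Fin n → Fin n → Prop) (hrefl : ∀ i, r i i)
    (htrans : ∀ {i j k}, r i j → r j k → r i k)
    (M : Mat n) (hM : ∀ i j, ¬ r i j → M i j = 0) :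
    ∀ (m : ℕ) (i j), ¬ r i j → (M ^ m) i j = 0 := by
  intro m
  induction m with
  | zero =>
    intro i j hij
    rw [pow_zero]
    exact Matrix.one_apply_ne (fun h => hij (h ▸ hrefl i))
  | succ m ih =>
    intro i j hij
    rw [pow_succ, Matrix.mul_apply]
    refine Finset.sum_eq_zero fun a _ => ?_
    by_cases h : r i a
    · rw [hM a j (fun h2 => hij (htrans h h2)), mul_zero]
    · rw [ih i a h, zero_mul]

lemma exp_entry_zero (r : Fin n → Fin n → Prop) (hrefl : ∀ i, r i i)
    (htrans : ∀ {i j k}, r i j → r j k → r i k)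
    (M : Mat n) (hM : ∀ i j, ¬ r i j → M i j = 0) :
    ∀ i j, ¬ r i j → exp M i j = 0 := by
  intro i j hij
  have hs : Summable fun m : ℕ => (m.factorial⁻¹ : ℝ) • M ^ m := expSeries_summable' M
  have h1 : exp M i j = entryCLM i j (∑' m : ℕ, (m.factorial⁻¹ : ℝ) • M ^ m) := by
    simp only [exp_eq_tsum ℝ]
    rfl
  rw [h1, (entryCLM i j).map_tsum hs]
  have : ∀ m : ℕ, entryCLM i j ((m.factorial⁻¹ : ℝ) • M ^ m) = 0 := by
    intro m
    rw [_root_.map_smul, entryCLM_apply, pow_entry_zero r hrefl htrans M hM m i j hij, smul_zero]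
  simp [this]

section Main

variable (A₀ A₁ : Mat n)

/-- The Dyson iteration map. -/
noncomputable def Phi (F : ℝ → Mat n) : ℝ → Mat n :=
  fun t => exp (t • A₀) * ∫ s in (0:ℝ)..t, exp ((-s) • A₀) * A₁ * F s

lemma cont_exp_smul (A : Mat n) : Continuous fun t : ℝ => exp (t • A) :=
  exp_continuous.comp (continuous_id.smul continuous_const)

lemma cont_integrand {F : ℝ → Mat n} (hF : Continuous F) :
    Continuous fun s : ℝ => exp ((-s) • A₀) * A₁ * F s :=
  (((cont_exp_smul A₀).comp continuous_neg).mul continuous_const).mul hF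

lemma cont_Phi {F : ℝ → Mat n} (hF : Continuous F) : Continuous (Phi A₀ A₁ F) := by
  refine (cont_exp_smul A₀).mul ?_
  exact intervalIntegral.continuous_primitive
    (fun a b => ((cont_integrand A₀ A₁ hF).intervalIntegrable a b)) 0

lemma exp_smul_mul_exp_neg_smul (A : Mat n) (t s : ℝ) :
    exp (t • A) * exp ((-s) • A) = exp ((t - s) • A) := by
  rw [← NormedSpace.exp_add_of_commute (((Commute.refl A).smul_left t).smul_right (-s))]
  congr 1
  rw [← add_smul]
  ring_nf

lemma Phi_eq {F : ℝ → Mat n} (hF : Continuous F) (t : ℝ) :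
    Phi A₀ A₁ F t = ∫ s in (0:ℝ)..t, exp ((t - s) • A₀) * A₁ * F s := by
  have hint : IntervalIntegrable (fun s => exp ((-s) • A₀) * A₁ * F s)
      MeasureTheory.volume 0 t := (cont_integrand A₀ A₁ hF).intervalIntegrable 0 t
  have h := (ContinuousLinearMap.mul ℝ (Mat n) (exp (t • A₀))).intervalIntegral_comp_comm hint
  rw [Phi, ← show (ContinuousLinearMap.mul ℝ (Mat n) (exp (t • A₀)))
      (∫ s in (0:ℝ)..t, exp ((-s) • A₀) * A₁ * F s)
      = exp (t • A₀) * ∫ s in (0:ℝ)..t, exp ((-s) • A₀) * A₁ * F s from rfl, ← h]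
  refine intervalIntegral.integral_congr fun s _ => ?_
  show exp (t • A₀) * (exp ((-s) • A₀) * A₁ * F s) = _
  rw [← mul_assoc, ← mul_assoc, exp_smul_mul_exp_neg_smul]

/-- Duhamel formula. -/
lemma duhamel (t : ℝ) :
    exp (t • (A₀ + A₁)) = exp (t • A₀)
      + Phi A₀ A₁ (fun s => exp (s • (A₀ + A₁))) t := by
  set A := A₀ + A₁ with hA
  have hderiv : ∀ s ∈ Set.uIcc (0:ℝ) t,
      HasDerivAt (fun u : ℝ => exp ((-u) • A₀) * exp (u • A))
        (exp ((-s) • A₀) * A₁ * exp (s • A)) s := by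
    intro s _
    have h1 : HasDerivAt (fun u : ℝ => exp ((-u) • A₀))
        ((-1 : ℝ) • (A₀ * exp ((-s) • A₀))) s := by
      have hb := hasDerivAt_exp_smul_const' A₀ (-s)
      have hn : HasDerivAt (fun u : ℝ => -u) (-1 : ℝ) s := (hasDerivAt_id s).neg
      exact HasDerivAt.scomp s hb hn
    have h2 := hasDerivAt_exp_smul_const A s
    have h := h1.mul h2
    refine h.congr_deriv (Eq.symm ?_)
    have cA : A * exp (s • A) = exp (s • A) * A :=
      (((Commute.refl A).smul_right s).exp_right)
    have cA0 : A₀ * exp ((-s) • A₀) = exp ((-s) • A₀) * A₀ :=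
      (((Commute.refl A₀).smul_right (-s)).exp_right)
    have hA1 : A₁ = A - A₀ := by rw [hA, add_sub_cancel_left]
    rw [hA1, mul_sub, sub_mul, ← cA, neg_one_smul, neg_mul, cA0]
    noncomm_ring
  have hint : IntervalIntegrable (fun s => exp ((-s) • A₀) * A₁ * exp (s • A))
      MeasureTheory.volume 0 t :=
    (cont_integrand A₀ A₁ (cont_exp_smul A)).intervalIntegrable 0 t
  have key := intervalIntegral.integral_eq_sub_of_hasDerivAt hderiv hint
  have h0 : exp ((-(0:ℝ)) • A₀) * exp ((0:ℝ) • A) = 1 := by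
    simp [exp_zero]
  rw [h0] at key
  have : Phi A₀ A₁ (fun s => exp (s • A)) t
      = exp (t • A₀) * (exp ((-t) • A₀) * exp (t • A) - 1) := by
    rw [Phi, key]
  rw [this, mul_sub, mul_one, ← mul_assoc, exp_smul_mul_exp_neg_smul]
  simp [exp_zero]


variable {N : ℕ} (g : Fin n → Fin N)

lemma exp_blockDiag (hA₀ : ∀ i j, g i ≠ g j → A₀ i j = 0) (t : ℝ) :
    ∀ i j, g i ≠ g j → exp (t • A₀) i j = 0 := by
  intro i j hij
  refine exp_entry_zero (fun i j => g i = g j) (fun i => rfl)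
    (fun h1 h2 => h1.trans h2) (t • A₀) ?_ i j hij
  intro i j hij
  rw [Matrix.smul_apply, hA₀ i j hij, smul_zero]

lemma exp_lower (hA₀ : ∀ i j, g i ≠ g j → A₀ i j = 0)
    (hA₁ : ∀ i j, (g j : ℕ) ≠ (g i : ℕ) + 1 → A₁ i j = 0) (t : ℝ) :
    ∀ i j, (g j : ℕ) < (g i : ℕ) → exp (t • (A₀ + A₁)) i j = 0 := by
  intro i j hij
  refine exp_entry_zero (fun i j => (g i : ℕ) ≤ (g j : ℕ)) (fun i => le_refl _)
    (fun h1 h2 => le_trans h1 h2) _ ?_ i j (not_le.mpr hij)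
  intro i j hij
  have hlt : (g j : ℕ) < (g i : ℕ) := not_le.mp hij
  have h0 : A₀ i j = 0 := hA₀ i j (by intro h; rw [h] at hlt; omega)
  have h1 : A₁ i j = 0 := hA₁ i j (by omega)
  rw [Matrix.smul_apply, Matrix.add_apply, h0, h1, add_zero, smul_zero]

lemma Phi_grade (hA₀ : ∀ i j, g i ≠ g j → A₀ i j = 0)
    (hA₁ : ∀ i j, (g j : ℕ) ≠ (g i : ℕ) + 1 → A₁ i j = 0)
    {F : ℝ → Mat n} (hF : Continuous F) (k : ℕ)
    (hFk : ∀ s i j, (g j : ℕ) < (g i : ℕ) + k → F s i j = 0) :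
    ∀ t i j, (g j : ℕ) < (g i : ℕ) + (k + 1) → Phi A₀ A₁ F t i j = 0 := by
  intro t i j hij
  rw [Phi, Matrix.mul_apply]
  refine Finset.sum_eq_zero fun a _ => ?_
  by_cases ha : g i = g a
  · have ha' : (g i : ℕ) = (g a : ℕ) := by rw [ha]
    have hIz : (∫ s in (0:ℝ)..t, exp ((-s) • A₀) * A₁ * F s) a j = 0 := by
      have hint : IntervalIntegrable (fun s => exp ((-s) • A₀) * A₁ * F s)
          MeasureTheory.volume 0 t := (cont_integrand A₀ A₁ hF).intervalIntegrable 0 t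
      have hcomm := (entryCLM a j).intervalIntegral_comp_comm hint
      rw [show (∫ s in (0:ℝ)..t, exp ((-s) • A₀) * A₁ * F s) a j
          = entryCLM a j (∫ s in (0:ℝ)..t, exp ((-s) • A₀) * A₁ * F s) from rfl, ← hcomm]
      have hz : ∀ s : ℝ, entryCLM a j (exp ((-s) • A₀) * A₁ * F s) = 0 := by
        intro s
        rw [entryCLM_apply, Matrix.mul_apply]
        refine Finset.sum_eq_zero fun q _ => ?_
        by_cases hq : (g q : ℕ) = (g a : ℕ) + 1
        · rw [hFk s q j (by omega), mul_zero]
        · have hz2 : (exp ((-s) • A₀) * A₁) a q = 0 := by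
            rw [Matrix.mul_apply]
            refine Finset.sum_eq_zero fun p _ => ?_
            by_cases hp : g a = g p
            · have hp' : (g a : ℕ) = (g p : ℕ) := by rw [hp]
              rw [hA₁ p q (by omega), mul_zero]
            · rw [exp_blockDiag A₀ g hA₀ (-s) a p hp, zero_mul]
          rw [hz2, zero_mul]
      simp only [hz]
      simp
    rw [hIz, mul_zero]
  · rw [exp_blockDiag A₀ g hA₀ t i a ha, zero_mul]

lemma cont_iter (d : ℕ) {F : ℝ → Mat n} (hF : Continuous F) :
    Continuous ((Phi A₀ A₁)^[d] F) := by
  induction d with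
  | zero => exact hF
  | succ d ih =>
    rw [Function.iterate_succ_apply']
    exact cont_Phi A₀ A₁ ih

lemma iter_grade (hA₀ : ∀ i j, g i ≠ g j → A₀ i j = 0)
    (hA₁ : ∀ i j, (g j : ℕ) ≠ (g i : ℕ) + 1 → A₁ i j = 0) (k : ℕ) :
    ∀ t i j, (g j : ℕ) < (g i : ℕ) + k →
      (Phi A₀ A₁)^[k] (fun s : ℝ => exp (s • (A₀ + A₁))) t i j = 0 := by
  induction k with
  | zero =>
    intro t i j hij
    exact exp_lower A₀ A₁ g hA₀ hA₁ t i j (by omega)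
  | succ k ih =>
    intro t i j hij
    rw [Function.iterate_succ_apply']
    exact Phi_grade A₀ A₁ g hA₀ hA₁
      (cont_iter A₀ A₁ k (cont_exp_smul _)) k ih t i j hij

lemma iter_kill (hA₀ : ∀ i j, g i ≠ g j → A₀ i j = 0)
    (hA₁ : ∀ i j, (g j : ℕ) ≠ (g i : ℕ) + 1 → A₁ i j = 0) (t : ℝ) :
    (Phi A₀ A₁)^[N] (fun s : ℝ => exp (s • (A₀ + A₁))) t = 0 := by
  ext i j
  rw [Matrix.zero_apply]
  exact iter_grade A₀ A₁ g hA₀ hA₁ N t i j (by have := (g j).isLt; omega)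

lemma decomp : ∀ (k : ℕ) (t : ℝ),
    exp (t • (A₀ + A₁)) =
      (∑ d ∈ Finset.range k, (Phi A₀ A₁)^[d] (fun u : ℝ => exp (u • A₀)) t)
      + (Phi A₀ A₁)^[k] (fun s : ℝ => exp (s • (A₀ + A₁))) t := by
  intro k
  induction k with
  | zero => intro t; simp
  | succ k ih =>
    intro t
    set e₀ : ℝ → Mat n := fun u : ℝ => exp (u • A₀) with he₀
    set E : ℝ → Mat n := fun s : ℝ => exp (s • (A₀ + A₁)) with hE
    have hIter : (Phi A₀ A₁)^[k] E
        = fun u => E u - ∑ d ∈ Finset.range k, (Phi A₀ A₁)^[d] e₀ u := by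
      funext u
      have h := ih u
      rw [show (Phi A₀ A₁)^[k] (fun s : ℝ => exp (s • (A₀ + A₁))) = (Phi A₀ A₁)^[k] E from rfl] at h
      rw [show exp (u • (A₀ + A₁)) = E u from rfl] at h
      rw [h]
      abel
    have hcE : Continuous E := cont_exp_smul _
    have hcS : ∀ d, Continuous ((Phi A₀ A₁)^[d] e₀) :=
      fun d => cont_iter A₀ A₁ d (cont_exp_smul _)
    have lin : Phi A₀ A₁ (fun u => E u - ∑ d ∈ Finset.range k, (Phi A₀ A₁)^[d] e₀ u) t
        = Phi A₀ A₁ E t - ∑ d ∈ Finset.range k, Phi A₀ A₁ ((Phi A₀ A₁)^[d] e₀) t := by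
      simp only [Phi]
      have h1 : ∀ s : ℝ,
          exp ((-s) • A₀) * A₁ * (E s - ∑ d ∈ Finset.range k, (Phi A₀ A₁)^[d] e₀ s)
          = exp ((-s) • A₀) * A₁ * E s
            - ∑ d ∈ Finset.range k, exp ((-s) • A₀) * A₁ * (Phi A₀ A₁)^[d] e₀ s := by
        intro s; rw [mul_sub, Finset.mul_sum]
      simp only [h1]
      rw [intervalIntegral.integral_sub ((cont_integrand A₀ A₁ hcE).intervalIntegrable 0 t)
        (((continuous_finset_sum _ fun d _ =>
          cont_integrand A₀ A₁ (hcS d)).intervalIntegrable 0 t)),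
        intervalIntegral.integral_finset_sum
          (fun d _ => (cont_integrand A₀ A₁ (hcS d)).intervalIntegrable 0 t),
        mul_sub, Finset.mul_sum]
    have hD : Phi A₀ A₁ E t = E t - e₀ t := by
      have h := duhamel A₀ A₁ t
      rw [← hE] at h
      rw [show exp (t • (A₀ + A₁)) = E t from rfl,
        show exp (t • A₀) = e₀ t from rfl] at h
      rw [h]
      abel
    rw [Function.iterate_succ_apply', hIter, lin, hD, Finset.sum_range_succ']
    have hit : ∀ d, Phi A₀ A₁ ((Phi A₀ A₁)^[d] e₀) t = (Phi A₀ A₁)^[d+1] e₀ t := by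
      intro d; rw [Function.iterate_succ_apply']
    simp only [hit, Function.iterate_zero_apply]
    have := ih t
    abel

lemma iter_bound {T c b : ℝ} (hc1 : 1 ≤ c) (hb : 0 ≤ b)
    (hc : ∀ s ∈ Set.Icc (0:ℝ) T, ‖exp (s • A₀)‖ ≤ c) (hA₁b : ‖A₁‖ ≤ b) :
    ∀ (d : ℕ), ∀ t ∈ Set.Icc (0:ℝ) T,
      ‖(Phi A₀ A₁)^[d] (fun u : ℝ => exp (u • A₀)) t‖
        ≤ c ^ (d + 1) * b ^ d * t ^ d / (Nat.factorial d) := by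
  have hc0 : (0:ℝ) ≤ c := le_trans zero_le_one hc1
  intro d
  induction d with
  | zero =>
    intro t ht
    simpa using hc t ht
  | succ d ih =>
    intro t ht
    obtain ⟨ht0, htT⟩ := ht
    have hcF : Continuous ((Phi A₀ A₁)^[d] (fun u : ℝ => exp (u • A₀))) :=
      cont_iter A₀ A₁ d (cont_exp_smul _)
    rw [Function.iterate_succ_apply', Phi_eq A₀ A₁ hcF]
    set F := (Phi A₀ A₁)^[d] (fun u : ℝ => exp (u • A₀)) with hF
    have hcint : Continuous fun s : ℝ => exp ((t - s) • A₀) * A₁ * F s :=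
      (((cont_exp_smul A₀).comp (continuous_const.sub continuous_id)).mul
        continuous_const).mul hcF
    calc ‖∫ s in (0:ℝ)..t, exp ((t - s) • A₀) * A₁ * F s‖
        ≤ ∫ s in (0:ℝ)..t, ‖exp ((t - s) • A₀) * A₁ * F s‖ :=
          intervalIntegral.norm_integral_le_integral_norm ht0
      _ ≤ ∫ s in (0:ℝ)..t,
            c * b * (c ^ (d + 1) * b ^ d * s ^ d / (Nat.factorial d)) := by
          apply intervalIntegral.integral_mono_on ht0
            (hcint.norm.intervalIntegrable 0 t)
            ((by fun_prop : Continuous fun s : ℝ =>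
              c * b * (c ^ (d + 1) * b ^ d * s ^ d / (Nat.factorial d))).intervalIntegrable 0 t)
          intro s hs
          obtain ⟨hs0, hst⟩ := hs
          have hFs := ih s ⟨hs0, le_trans hst htT⟩
          have hexp := hc (t - s) ⟨by linarith, by linarith⟩
          calc ‖exp ((t - s) • A₀) * A₁ * F s‖
              ≤ ‖exp ((t - s) • A₀)‖ * ‖A₁‖ * ‖F s‖ :=
                le_trans (norm_mul_le _ _)
                  (mul_le_mul_of_nonneg_right (norm_mul_le _ _) (norm_nonneg _))
            _ ≤ c * b * (c ^ (d + 1) * b ^ d * s ^ d / (Nat.factorial d)) := by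
                have h1 : (0:ℝ) ≤ c ^ (d + 1) * b ^ d * s ^ d / (Nat.factorial d) := by
                  positivity
                gcongr
      _ = c ^ (d + 1 + 1) * b ^ (d + 1) * t ^ (d + 1) / (Nat.factorial (d + 1)) := by
          have hrw : (fun s : ℝ => c * b * (c ^ (d + 1) * b ^ d * s ^ d / (Nat.factorial d)))
              = fun s : ℝ => (c * b * c ^ (d + 1) * b ^ d / (Nat.factorial d)) * s ^ d := by
            funext s; ring
          rw [hrw, intervalIntegral.integral_const_mul, integral_pow]
          have hfac : (Nat.factorial (d + 1) : ℝ) = (d + 1) * Nat.factorial d := by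
            rw [Nat.factorial_succ]; push_cast; ring
          rw [hfac]
          have hd0 : (Nat.factorial d : ℝ) ≠ 0 := by positivity
          field_simp
          ring

end Main

end Stmt17Aux

open Stmt17Aux

/-- Norm bound from the terminating Dyson expansion: if with respect to an `N`-block
grading `g` the matrix `A₀` is block diagonal and `A₁` raises the grading by one, and
`‖exp(sA₀)‖ ≤ c` for `s ∈ [0,T]` with `‖A₁‖ ≤ b`, then
`‖exp(t(A₀+A₁))‖ ≤ c ∑_{k<N} (t b c)^k / k!` for all `t ∈ [0,T]`. -/
theorem stmt_17 {n N : ℕ} (A₀ A₁ : Matrix (Fin n) (Fin n) ℂ)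
    (g : Fin n → Fin N)
    (hA₀ : ∀ i j, g i ≠ g j → A₀ i j = 0)
    (hA₁ : ∀ i j, (g j : ℕ) ≠ (g i : ℕ) + 1 → A₁ i j = 0)
    (T c b : ℝ) (hc1 : 1 ≤ c) (hb : 0 ≤ b)
    (hc : ∀ s ∈ Set.Icc (0 : ℝ) T, ‖NormedSpace.exp (s • A₀)‖ ≤ c)
    (hA₁b : ‖A₁‖ ≤ b) :
    ∀ t ∈ Set.Icc (0 : ℝ) T,
      ‖NormedSpace.exp (t • (A₀ + A₁))‖ ≤
        c * ∑ k ∈ Finset.range N, (t * b * c) ^ k / (Nat.factorial k) := by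
  have hexp_eq : (NormedSpace.exp : Mat n → Mat n) = NormedSpace.exp := rfl
  have hcR : ∀ s ∈ Set.Icc (0 : ℝ) T, ‖NormedSpace.exp (s • A₀)‖ ≤ c := by
    intro s hs
    rw [← hexp_eq]
    exact hc s hs
  intro t ht
  rw [show NormedSpace.exp (t • (A₀ + A₁)) = NormedSpace.exp (t • (A₀ + A₁)) by
    rw [hexp_eq]]
  rw [decomp A₀ A₁ N t, iter_kill A₀ A₁ g hA₀ hA₁ t, add_zero]
  have hc0 : (0 : ℝ) ≤ c := le_trans zero_le_one hc1
  have ht0 : (0 : ℝ) ≤ t := ht.1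
  calc ‖∑ d ∈ Finset.range N, (Phi A₀ A₁)^[d] (fun u : ℝ => NormedSpace.exp (u • A₀)) t‖
      ≤ ∑ d ∈ Finset.range N,
          ‖(Phi A₀ A₁)^[d] (fun u : ℝ => NormedSpace.exp (u • A₀)) t‖ :=
        norm_sum_le _ _
    _ ≤ ∑ d ∈ Finset.range N, c ^ (d + 1) * b ^ d * t ^ d / (Nat.factorial d) :=
        Finset.sum_le_sum fun d _ => iter_bound A₀ A₁ hc1 hb hcR hA₁b d t ht
    _ = c * ∑ k ∈ Finset.range N, (t * b * c) ^ k / (Nat.factorial k) := by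
        rw [Finset.mul_sum]
        refine Finset.sum_congr rfl fun d _ => ?_
        rw [mul_pow, mul_pow, pow_succ]
        ring
end
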